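/- Fix a natural number N. The function f(x) = x · (1 - x^{N+1}) on [0,1] attains its maximum over [0,1] at the point x* = (N+2)^{-1/(N+1)}, and the maximum value equals (N+2)^{-1/(N+1)} · (N+1)/(N+2). -/
import Mathlib


/-- The degree-of-confirmation objective `f x = x * (1 - x ^ (N + 1))` on `[0,1]` attains
its maximum at `x* = (N + 2) ^ (-1 / (N + 1))`, and the maximum value equals
`(N + 2) ^ (-1 / (N + 1)) * (N + 1) / (N + 2)`. -/
theorem stmt_7 (N : ℕ) :
    IsMaxOn (fun x : ℝ => x * (1 - x ^ (N + 1))) (Set.Icc 0 1)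
        (((N : ℝ) + 2) ^ (-(1 : ℝ) / ((N : ℝ) + 1))) ∧
      (((N : ℝ) + 2) ^ (-(1 : ℝ) / ((N : ℝ) + 1))) *
          (1 - ((((N : ℝ) + 2) ^ (-(1 : ℝ) / ((N : ℝ) + 1)))) ^ (N + 1)) =
        (((N : ℝ) + 2) ^ (-(1 : ℝ) / ((N : ℝ) + 1))) * (((N : ℝ) + 1) / ((N : ℝ) + 2)) := by
  set a : ℝ := ((N : ℝ) + 2) ^ (-(1 : ℝ) / ((N : ℝ) + 1)) with ha_def
  have hN2 : (0 : ℝ) < (N : ℝ) + 2 := by positivity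
  have hN1 : ((N : ℝ) + 1) ≠ 0 := by positivity
  have ha : 0 < a := Real.rpow_pos_of_pos hN2 _
  have hkey : a ^ (N + 1) = ((N : ℝ) + 2)⁻¹ := by
    rw [ha_def, ← Real.rpow_natCast _ (N + 1), ← Real.rpow_mul hN2.le]
    push_cast
    rw [div_mul_cancel₀, Real.rpow_neg_one]
    · exact hN1
  constructor
  · intro x hx
    simp only [Set.mem_Icc] at hx
    simp only [Set.mem_setOf_eq]
    -- key: x^(N+2) ≥ a^(N+2) + (x - a), via Bernoulli
    have hb : 1 + ((N : ℕ) + 2 : ℕ) * (x / a - 1) ≤ (1 + (x / a - 1)) ^ (N + 2) := by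
      apply one_add_mul_le_pow
      have : 0 ≤ x / a := div_nonneg hx.1 ha.le
      linarith
    have hxa : (1 + (x / a - 1)) = x / a := by ring
    rw [hxa] at hb
    have h2 : a ^ (N + 2) * (1 + ((N : ℝ) + 2) * (x / a - 1)) ≤ a ^ (N + 2) * (x / a) ^ (N + 2) := by
      apply mul_le_mul_of_nonneg_left _ (by positivity)
      push_cast at hb
      convert hb using 2
    rw [div_pow, mul_div_cancel₀ _ (by positivity : a ^ (N + 2) ≠ 0)] at h2
    have hsucc : a ^ (N + 2) = a ^ (N + 1) * a := by ring
    have hmain : a ^ (N + 1) * ((N : ℝ) + 2) = 1 := by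
      rw [hkey]; field_simp
    -- a^(N+2) * (1 + (N+2)(x/a - 1)) = a^(N+2) + (N+2) a^(N+1) (x - a) = a^(N+2) + (x - a)
    have h3 : a ^ (N + 2) * (1 + ((N : ℝ) + 2) * (x / a - 1))
        = a ^ (N + 2) + (a ^ (N + 1) * ((N : ℝ) + 2)) * (x - a) := by
      field_simp
      ring
    rw [h3, hmain, one_mul] at h2
    have : x * (1 - x ^ (N + 1)) = x - x ^ (N + 2) := by ring
    rw [this]
    have : a * (1 - a ^ (N + 1)) = a - a ^ (N + 2) := by ring
    rw [this]
    linarith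
  · rw [hkey]
    congr 1
    field_simp
    ring
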